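/- Let (X,τ) be a complete metrizable locally solid vector lattice (complete with respect to the canonical uniformity of the topological additive group). Then the unbounded topology uτ is metrizable if and only if X has a quasi-interior point. -/

import Mathlib

open Filter Set Topology

variable {X : Type*} [Lattice X] [AddCommGroup X] [Module ℝ X]
  [CovariantClass X X (· + ·) (· ≤ ·)] [PosSMulMono ℝ X]

/-- The Archimedean property for a lattice-ordered group. -/
def VLArchimedean (X : Type*) [Lattice X] [AddCommGroup X] : Prop :=
  ∀ x y : X, 0 ≤ x → (∀ n : ℕ, n • x ≤ y) → x = 0

/-- A set is solid if `x ∈ S` and `|y| ≤ |x|` imply `y ∈ S`. -/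
def IsSolid (S : Set X) : Prop := ∀ ⦃x y : X⦄, x ∈ S → |y| ≤ |x| → y ∈ S

/-- A locally solid (linear) topology on a vector lattice. -/
def IsLocallySolidTop (τ : TopologicalSpace X) : Prop :=
  @IsTopologicalAddGroup X τ _ ∧ @ContinuousSMul ℝ X _ _ τ ∧
    ∀ U ∈ @nhds X τ 0, ∃ V ∈ @nhds X τ 0, IsSolid V ∧ V ⊆ U

/-- An order ideal: a solid linear subspace. -/
def IsOrderIdeal (A : Set X) : Prop :=
  0 ∈ A ∧ (∀ x ∈ A, ∀ y ∈ A, x + y ∈ A) ∧ (∀ (c : ℝ), ∀ x ∈ A, c • x ∈ A) ∧ IsSolid A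

/-- The order ideal generated by a set. -/
def idealGenerated (A : Set X) : Set X := ⋂₀ {I | IsOrderIdeal I ∧ A ⊆ I}

/-- A band: an order ideal closed under existing suprema. -/
def IsBand (B : Set X) : Prop :=
  IsOrderIdeal B ∧ ∀ D ⊆ B, ∀ x : X, IsLUB D x → x ∈ B

/-- The band generated by a set. -/
def bandGenerated (A : Set X) : Set X := ⋂₀ {B | IsBand B ∧ A ⊆ B}

/-- `A` is a countable order basis: `A` is at most countable and generates `X` as a band. -/
def CountableOrderBasis (A : Set X) : Prop := A.Countable ∧ bandGenerated A = Set.univ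

/-- The neighbourhood filter of zero of the unbounded topology `u_A τ`:
generated by the sets `{x : |x| ⊓ a ∈ U}` for `U` a `τ`-neighbourhood of zero, `a ∈ A₊`. -/
def unbNhdsZero (τ : TopologicalSpace X) (A : Set X) : Filter X :=
  ⨅ a ∈ {a ∈ A | 0 ≤ a}, Filter.comap (fun x => |x| ⊓ a) (@nhds X τ 0)

/-- The unbounded topology `u_A τ` induced by the ideal `A`; `u τ = unbTopology τ Set.univ`. -/
def unbTopology (τ : TopologicalSpace X) (A : Set X) : TopologicalSpace X :=
  TopologicalSpace.mkOfNhds fun x => Filter.map (x + ·) (unbNhdsZero τ A)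

/-- A sublattice/ideal is order dense if every nonzero positive vector dominates a
nonzero positive vector of it. -/
def OrderDense (A : Set X) : Prop := ∀ x : X, 0 < x → ∃ y ∈ A, 0 < y ∧ y ≤ x

/-- A minimal topology: a Hausdorff locally solid topology with no strictly coarser
Hausdorff locally solid topology. (In Mathlib's order on `TopologicalSpace`,
`τ ≤ σ` means `τ` is finer than `σ`.) -/
def IsMinimalTop (τ : TopologicalSpace X) : Prop :=
  IsLocallySolidTop τ ∧ @T2Space X τ ∧
    ∀ σ : TopologicalSpace X, IsLocallySolidTop σ → @T2Space X σ → τ ≤ σ → σ = τ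

/-- The countable sup property. -/
def CountableSupProperty (Y : Type*) [Lattice Y] : Prop :=
  ∀ S : Set Y, ∀ x : Y, S.Nonempty → IsLUB S x → ∃ C ⊆ S, C.Countable ∧ IsLUB C x

/-- Order convergence to zero of a net: there is a downward directed set `D` with
infimum `0`, each member of which eventually dominates `|x α|`. -/
def OrderNull {ι : Type*} [Preorder ι] (x : ι → X) : Prop :=
  ∃ D : Set X, D.Nonempty ∧ (∀ a ∈ D, ∀ b ∈ D, ∃ c ∈ D, c ≤ a ∧ c ≤ b) ∧
    IsGLB D 0 ∧ ∀ d ∈ D, ∃ α₀ : ι, ∀ α, α₀ ≤ α → |x α| ≤ d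

/-- Unbounded order (uo-) convergence to zero of a net. -/
def UoNull {ι : Type*} [Preorder ι] (x : ι → X) : Prop :=
  ∀ u : X, 0 ≤ u → OrderNull (fun α => |x α| ⊓ u)

/-- A set is topologically bounded if it is absorbed by every neighbourhood of zero. -/
def TopBounded (τ : TopologicalSpace X) (S : Set X) : Prop :=
  ∀ U ∈ @nhds X τ 0, ∃ l : ℝ, 0 < l ∧ ∀ x ∈ S, l • x ∈ U

/-- A locally bounded topology: it has a topologically bounded neighbourhood of zero. -/
def LocallyBoundedTop (τ : TopologicalSpace X) : Prop :=
  ∃ V ∈ @nhds X τ 0, TopBounded τ V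

/-- A submetrizable topology: finer than some metrizable linear topology.
(In Mathlib's order on `TopologicalSpace`, `τ ≤ σ` means `τ` is finer than `σ`.) -/
def Submetrizable (τ : TopologicalSpace X) : Prop :=
  ∃ σ : TopologicalSpace X, @IsTopologicalAddGroup X σ _ ∧ @ContinuousSMul ℝ X _ _ σ ∧
    @TopologicalSpace.MetrizableSpace X σ ∧ τ ≤ σ

/-- A Riesz submetrizable topology: finer than some metrizable locally solid topology. -/
def RieszSubmetrizable (τ : TopologicalSpace X) : Prop :=
  ∃ σ : TopologicalSpace X, IsLocallySolidTop σ ∧ @TopologicalSpace.MetrizableSpace X σ ∧ τ ≤ σ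

/-- Dedekind (order) completeness. -/
def DedekindComplete (Y : Type*) [Lattice Y] : Prop :=
  ∀ S : Set Y, S.Nonempty → BddAbove S → ∃ x, IsLUB S x

/-- Lateral completeness: every nonempty set of pairwise disjoint positive vectors
has a supremum. -/
def LaterallyComplete (Y : Type*) [Lattice Y] [AddCommGroup Y] : Prop :=
  ∀ S : Set Y, S.Nonempty → (∀ x ∈ S, 0 ≤ x) → (S.Pairwise fun a b => a ⊓ b = 0) →
    ∃ x, IsLUB S x

/-!
The zero filter of `uτ` is generated by the sets `{x | |x| ⊓ a ∈ V}`. For `e ≥ 0`, `e` is a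
quasi-interior point iff the sets with `a = n • e` already generate it. If `I_e` is dense,
approximate `a` by `z ∈ I_e` with `|z| ≤ k • e` and use `|w| ⊓ a ≤ |w| ⊓ k • e + |a - z|`.
Conversely `m • ((x - x ⊓ m • a) ⊓ a) ≤ x` makes `x - x ⊓ n • e` null for `u_{ℕe} τ = uτ`,
hence `τ`-null since it is bounded by `x`, so `x ⊓ n • e ∈ I_e` tends to `x`.

If `uτ` is metrizable, countably many `aₖ` suffice, and completeness of `τ` gives `cₖ > 0`
for which `e = ∑ cₖ • aₖ` converges; `e` dominates every `aₖ` up to a multiple. Conversely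
the description by the `n • e` makes `uτ` a first countable Hausdorff group, hence metrizable.
-/

section LatticeOrderedGroup

variable {E : Type*} [Lattice E] [AddCommGroup E] [AddLeftMono E]

instance : IsOrderedAddMonoid E where
  add_le_add_left _ _ h c := add_le_add_left h c

theorem nsmul_inf_sub_inf_nsmul_le {x a : E} (hx : 0 ≤ x) (ha : 0 ≤ a) (m : ℕ) :
    m • ((x - x ⊓ m • a) ⊓ a) ≤ x := by
  set g : ℕ → E := fun j => x ⊓ j • a
  set d : ℕ → E := fun j => (x - g j) ⊓ a
  have hg_mono : Monotone g := fun i j hij => inf_le_inf_left x (nsmul_le_nsmul_left ha hij)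
  have hd_anti : Antitone d := fun i j hij => inf_le_inf_right a (sub_le_sub_left (hg_mono hij) x)
  -- `d j + g j = x ⊓ (a + g j) ≤ g (j + 1)`
  have hd_le : ∀ j, d j ≤ g (j + 1) - g j := fun j => by
    rw [le_sub_iff_add_le, inf_add, sub_add_cancel]
    refine inf_le_inf_left x ?_
    rw [succ_nsmul, add_comm]
    exact add_le_add_left inf_le_right a
  calc m • d m = ∑ _j ∈ Finset.range m, d m := by simp
    _ ≤ ∑ j ∈ Finset.range m, (g (j + 1) - g j) := Finset.sum_le_sum fun j hj =>
        (hd_anti (Finset.mem_range.1 hj).le).trans (hd_le j)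
    _ = g m - g 0 := Finset.sum_range_sub g m
    _ = g m := by simp [g, hx]
    _ ≤ x := inf_le_left

theorem inf_add_le_inf_add {t : E} (u s : E) (ht : 0 ≤ t) : u ⊓ (s + t) ≤ u ⊓ s + t := by
  rw [inf_add]
  exact inf_le_inf_right _ (le_add_of_nonneg_right ht)

theorem add_inf_le_inf_add_inf {u v a : E} (hu : 0 ≤ u) (hv : 0 ≤ v) (ha : 0 ≤ a) :
    (u + v) ⊓ a ≤ u ⊓ a + v ⊓ a := by
  rw [add_inf, inf_add, inf_add]
  refine le_inf (le_inf inf_le_left ?_) (le_inf ?_ ?_) <;> refine inf_le_right.trans ?_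
  · exact le_add_of_nonneg_right hv
  · exact le_add_of_nonneg_left hu
  · exact le_add_of_nonneg_left ha

theorem abs_inf_le_abs_inf_add_abs_sub (w : E) {a z b : E} (hz : |z| ≤ b) :
    |w| ⊓ a ≤ |w| ⊓ b + |a - z| := calc
  |w| ⊓ a ≤ |w| ⊓ (b + |a - z|) := by
    refine inf_le_inf_left _ ((le_abs_self a).trans ?_)
    simpa using (abs_add_le z (a - z)).trans (add_le_add_left hz _)
  _ ≤ |w| ⊓ b + |a - z| := inf_add_le_inf_add _ _ (abs_nonneg _)

theorem abs_add_inf_le {a : E} (x y : E) (ha : 0 ≤ a) : |x + y| ⊓ a ≤ |x| ⊓ a + |y| ⊓ a :=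
  (inf_le_inf_right a (abs_add_le x y)).trans
    (add_inf_le_inf_add_inf (abs_nonneg x) (abs_nonneg y) ha)

theorem IsSolid.mem_of_le {S : Set E} (hS : IsSolid S) {x y : E} (hx : x ∈ S) (hy : 0 ≤ y)
    (hyx : y ≤ x) : y ∈ S :=
  hS hx (by rwa [abs_of_nonneg hy, abs_of_nonneg (hy.trans hyx)])

end LatticeOrderedGroup

section VectorLattice

variable {E : Type*} [Lattice E] [AddCommGroup E] [Module ℝ E] [PosSMulMono ℝ E]

theorem abs_smul_le (c : ℝ) (x : E) : |c • x| ≤ |c| • |x| := by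
  have key : ∀ y : E, c • y ≤ |c| • |y| := fun y => by
    rcases le_or_gt 0 c with hc | hc
    · rw [abs_of_nonneg hc]
      exact smul_le_smul_of_nonneg_left (le_abs_self y) hc
    · rw [abs_of_neg hc, ← neg_smul_neg]
      exact smul_le_smul_of_nonneg_left (neg_le_abs y) (neg_nonneg.2 hc.le)
  exact sup_le (key x) (by simpa [← smul_neg] using key (-x))

variable [AddLeftMono E]

theorem idealGenerated_singleton {e : E} (he : 0 ≤ e) :
    idealGenerated {e} = {x | ∃ c : ℝ, |x| ≤ c • e} := by
  refine subset_antisymm (sInter_subset_of_mem ⟨⟨⟨0, by simp⟩, ?_, ?_, ?_⟩, ?_⟩) ?_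
  · rintro x ⟨c, hc⟩ y ⟨d, hd⟩
    exact ⟨c + d, (abs_add_le x y).trans (by rw [add_smul]; exact add_le_add hc hd)⟩
  · rintro r x ⟨c, hc⟩
    refine ⟨|r| * c, (abs_smul_le r x).trans ?_⟩
    rw [mul_smul]
    exact smul_le_smul_of_nonneg_left hc (abs_nonneg r)
  · rintro x y ⟨c, hc⟩ hyx
    exact ⟨c, hyx.trans hc⟩
  · simpa using ⟨1, by simp [abs_of_nonneg he]⟩
  · rintro x ⟨c, hc⟩ I ⟨⟨-, -, hsmul, hsolid⟩, heI⟩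
    exact hsolid (hsmul c e (heI rfl)) (hc.trans (le_abs_self _))

theorem exists_le_nsmul_of_smul_le {c : ℝ} {a e : E} (hc : 0 < c) (he : 0 ≤ e) (h : c • a ≤ e) :
    ∃ N : ℕ, a ≤ N • e :=
  ⟨⌈c⁻¹⌉₊, calc
    a = c⁻¹ • c • a := (inv_smul_smul₀ hc.ne' a).symm
    _ ≤ c⁻¹ • e := smul_le_smul_of_nonneg_left h (inv_nonneg.2 hc.le)
    _ ≤ (⌈c⁻¹⌉₊ : ℝ) • e := smul_le_smul_of_nonneg_right (Nat.le_ceil _) he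
    _ = ⌈c⁻¹⌉₊ • e := Nat.cast_smul_eq_nsmul ℝ _ e⟩

end VectorLattice

theorem exists_pos_summable_smul {F : Type*} [AddCommGroup F] [Module ℝ F] [UniformSpace F]
    [IsUniformAddGroup F] [ContinuousSMul ℝ F] [CompleteSpace F] [FirstCountableTopology F]
    (a : ℕ → F) : ∃ c : ℕ → ℝ, (∀ k, 0 < c k) ∧ Summable fun k => c k • a k := by
  obtain ⟨u, hu, hu_add⟩ := IsTopologicalAddGroup.exists_antitone_basis_nhds_zero F
  have hc : ∀ k, ∃ c : ℝ, 0 < c ∧ c • a k ∈ u (k + 1) := fun k => by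
    have : Tendsto (fun c : ℝ => c • a k) (𝓝[>] 0) (𝓝 0) :=
      ((continuous_id.smul continuous_const).tendsto' (0 : ℝ) 0 (zero_smul _ _)).mono_left
        nhdsWithin_le_nhds
    exact (eventually_mem_nhdsWithin.and (this.eventually_mem (hu.mem (k + 1)))).exists
  choose c hc_pos hc_mem using hc
  -- each term sits one level deeper than its index, so a tail sum starting at `m` lands in `u m`
  have htail : ∀ t : Finset ℕ, ∀ m, (∀ i ∈ t, m ≤ i) → ∑ i ∈ t, c i • a i ∈ u m := fun t => by
    induction t using Finset.induction_on_min with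
    | empty => exact fun m _ => by simpa using mem_of_mem_nhds (hu.mem m)
    | insert i t hit ih =>
      intro m hm
      rw [Finset.sum_insert fun h => lt_irrefl _ (hit i h)]
      exact hu.antitone (hm i (Finset.mem_insert_self i t))
        (hu_add i (Set.add_mem_add (hc_mem i) (ih (i + 1) fun j hj => hit j hj)))
  refine ⟨c, hc_pos, summable_iff_vanishing.2 fun U hU => ?_⟩
  obtain ⟨m, -, hm⟩ := hu.toHasBasis.mem_iff.1 hU
  refine ⟨Finset.range m, fun t ht => hm (htail t m fun i hi => ?_)⟩
  exact not_lt.1 fun h => Finset.disjoint_left.1 ht hi (Finset.mem_range.2 h)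

theorem IsTopologicalAddGroup.metrizableSpace_of_isCountablyGenerated {G : Type*}
    [AddCommGroup G] [TopologicalSpace G] [IsTopologicalAddGroup G] [T0Space G]
    [(𝓝 (0 : G)).IsCountablyGenerated] : TopologicalSpace.MetrizableSpace G := by
  let := IsTopologicalAddGroup.rightUniformSpace G
  have := isUniformAddGroup_of_addCommGroup (G := G)
  have : (uniformity G).IsCountablyGenerated := by
    rw [uniformity_eq_comap_nhds_zero']
    infer_instance
  exact UniformSpace.metrizableSpace

section LocallySolid

variable {E : Type*} [Lattice E] [AddCommGroup E] [Module ℝ E] [τ : TopologicalSpace E]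
  {α : Type*} {l : Filter α}

theorem IsLocallySolidTop.exists_solid_half (hτ : IsLocallySolidTop τ) {V : Set E}
    (hV : V ∈ 𝓝 0) : ∃ W ∈ 𝓝 (0 : E), IsSolid W ∧ ∀ v ∈ W, ∀ w ∈ W, v + w ∈ V := by
  have := hτ.1
  obtain ⟨V', hV', hV'V⟩ := exists_nhds_zero_half hV
  obtain ⟨W, hW, hWsolid, hWV'⟩ := hτ.2.2 V' hV'
  exact ⟨W, hW, hWsolid, fun v hv w hw => hV'V v (hWV' hv) w (hWV' hw)⟩

theorem IsLocallySolidTop.tendsto_nhds_zero_of_abs_le (hτ : IsLocallySolidTop τ)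
    {f g : α → E} (hg : Tendsto g l (𝓝 0)) (hfg : ∀ᶠ i in l, |f i| ≤ |g i|) :
    Tendsto f l (𝓝 0) := tendsto_def.2 fun U hU => by
  obtain ⟨V, hV, hVsolid, hVU⟩ := hτ.2.2 U hU
  filter_upwards [hg hV, hfg] with i hgi hfgi using hVU (hVsolid hgi hfgi)

theorem IsLocallySolidTop.continuous_of_abs_sub_le (hτ : IsLocallySolidTop τ) {f : E → E}
    (hf : ∀ x y, |f x - f y| ≤ |x - y|) : Continuous f := by
  have := hτ.1
  refine continuous_iff_continuousAt.2 fun x => tendsto_sub_nhds_zero_iff.1 ?_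
  exact hτ.tendsto_nhds_zero_of_abs_le (tendsto_sub_nhds_zero_iff.2 tendsto_id)
    (.of_forall fun y => hf y x)

variable [AddLeftMono E]

theorem IsLocallySolidTop.orderClosedTopology (hτ : IsLocallySolidTop τ) [T1Space E] :
    OrderClosedTopology E := by
  have := hτ.1
  have hneg : Continuous fun x : E => x⁻ := hτ.continuous_of_abs_sub_le fun x y => by
    rw [abs_sub_comm x y]
    simpa [negPart_def, neg_add_eq_sub] using abs_sup_sub_sup_le_abs (-x) (-y) 0
  refine ⟨?_⟩
  have : {p : E × E | p.1 ≤ p.2} = (fun p : E × E => (p.2 - p.1)⁻) ⁻¹' {0} := by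
    ext p; simp
  rw [this]
  exact isClosed_singleton.preimage (hneg.comp (continuous_snd.sub continuous_fst))

variable [PosSMulMono ℝ E]

theorem IsLocallySolidTop.tendsto_nhds_zero_of_nsmul_abs_le (hτ : IsLocallySolidTop τ)
    {f : α → E} {x : E} (hx : 0 ≤ x) (h : ∀ m : ℕ, ∀ᶠ i in l, m • |f i| ≤ x) :
    Tendsto f l (𝓝 0) := tendsto_def.2 fun U hU => by
  have := hτ.2.1
  obtain ⟨V, hV, hVsolid, hVU⟩ := hτ.2.2 U hU
  have hlim : Tendsto (fun m : ℕ => (m : ℝ)⁻¹ • x) atTop (𝓝 0) := by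
    simpa using (tendsto_inv_atTop_zero.comp (tendsto_natCast_atTop_atTop (R := ℝ))).smul_const x
  obtain ⟨m, hm, hmV⟩ := ((eventually_gt_atTop 0).and (hlim.eventually_mem hV)).exists
  filter_upwards [h m] with i hi
  refine hVU (hVsolid hmV ?_)
  have hm' : (m : ℝ) ≠ 0 := by positivity
  rw [abs_of_nonneg (smul_nonneg (by positivity) hx), ← inv_smul_smul₀ hm' (|f i|),
    Nat.cast_smul_eq_nsmul]
  exact smul_le_smul_of_nonneg_left hi (by positivity)

end LocallySolid

section Unbounded

variable {E : Type*} [Lattice E] [AddCommGroup E] [τ : TopologicalSpace E] {α : Type*}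
  {l : Filter α} {A B : Set E}

theorem tendsto_unbNhdsZero_iff {f : α → E} :
    Tendsto f l (unbNhdsZero τ A) ↔ ∀ a ∈ A, 0 ≤ a → Tendsto (fun i => |f i| ⊓ a) l (𝓝 0) := by
  simp [unbNhdsZero, tendsto_iInf, tendsto_comap_iff, Function.comp_def]

theorem unbNhdsZero_le_comap {a : E} (ha : a ∈ A) (ha0 : 0 ≤ a) :
    unbNhdsZero τ A ≤ comap (fun x => |x| ⊓ a) (𝓝 0) :=
  iInf₂_le a ⟨ha, ha0⟩

theorem tendsto_neg_unbNhdsZero : Tendsto Neg.neg (unbNhdsZero τ A) (unbNhdsZero τ A) :=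
  tendsto_unbNhdsZero_iff.2 fun a ha ha0 => by
    simpa using tendsto_unbNhdsZero_iff.1 tendsto_id a ha ha0

theorem isCountablyGenerated_unbNhdsZero [FirstCountableTopology E]
    (hA : A.Countable) : (unbNhdsZero τ A).IsCountablyGenerated := by
  have : Countable {a | a ∈ A ∧ 0 ≤ a} := (hA.mono fun _ h => h.1).to_subtype
  rw [unbNhdsZero, iInf_subtype']
  infer_instance

variable [AddLeftMono E]

theorem pure_zero_le_unbNhdsZero : pure 0 ≤ unbNhdsZero τ A :=
  tendsto_id'.1 <| tendsto_unbNhdsZero_iff.2 fun a _ ha =>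
    tendsto_pure_left.2 fun _ hs => by simpa [ha] using mem_of_mem_nhds hs

variable [Module ℝ E]

theorem comap_abs_inf_mono (hτ : IsLocallySolidTop τ) {a b : E} (ha : 0 ≤ a) (hab : a ≤ b) :
    comap (fun x => |x| ⊓ b) (𝓝 0) ≤ comap (fun x : E => |x| ⊓ a) (𝓝 0) :=
  tendsto_comap_iff.2 <| hτ.tendsto_nhds_zero_of_abs_le tendsto_comap <| .of_forall fun x => by
    simp only [Function.comp_apply, abs_of_nonneg (le_inf (abs_nonneg x) ha),
      abs_of_nonneg (le_inf (abs_nonneg x) (ha.trans hab))]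
    exact inf_le_inf_left _ hab

theorem unbNhdsZero_le_of_forall_le (hτ : IsLocallySolidTop τ)
    (h : ∀ a ∈ A, 0 ≤ a → ∃ b ∈ B, a ≤ b) : unbNhdsZero τ B ≤ unbNhdsZero τ A :=
  le_iInf₂ fun a ⟨ha, ha0⟩ => by
    obtain ⟨b, hb, hab⟩ := h a ha ha0
    exact (unbNhdsZero_le_comap hb (ha0.trans hab)).trans (comap_abs_inf_mono hτ ha0 hab)

theorem tendsto_add_unbNhdsZero (hτ : IsLocallySolidTop τ) :
    Tendsto (fun p : E × E => p.1 + p.2) (unbNhdsZero τ A ×ˢ unbNhdsZero τ A)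
      (unbNhdsZero τ A) := by
  have := hτ.1
  refine tendsto_unbNhdsZero_iff.2 fun a ha ha0 => ?_
  have h₁ := tendsto_unbNhdsZero_iff.1 (tendsto_fst (g := unbNhdsZero τ A)) a ha ha0
  have h₂ := tendsto_unbNhdsZero_iff.1 (tendsto_snd (f := unbNhdsZero τ A)) a ha ha0
  refine hτ.tendsto_nhds_zero_of_abs_le (by simpa using h₁.add h₂) (.of_forall fun p => ?_)
  rw [abs_of_nonneg (le_inf (abs_nonneg _) ha0),
    abs_of_nonneg (add_nonneg (le_inf (abs_nonneg _) ha0) (le_inf (abs_nonneg _) ha0))]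
  exact abs_add_inf_le p.1 p.2 ha0

theorem nhds_unbTopology (hτ : IsLocallySolidTop τ) (x : E) :
    @nhds E (unbTopology τ A) x = map (x + ·) (unbNhdsZero τ A) := by
  refine TopologicalSpace.nhds_mkOfNhds _ x (fun y => ?_) fun y s hs => ?_
  · simpa using map_mono (m := (y + ·)) (pure_zero_le_unbNhdsZero (τ := τ) (A := A))
  · have : ∀ᶠ b in unbNhdsZero τ A, ∀ᶠ c in unbNhdsZero τ A, y + (b + c) ∈ s :=
      (tendsto_add_unbNhdsZero hτ).eventually hs |>.curry
    rw [eventually_map]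
    filter_upwards [this] with b hb
    rw [mem_map]
    filter_upwards [hb] with c hc
    simpa [add_assoc] using hc

theorem nhds_zero_unbTopology (hτ : IsLocallySolidTop τ) :
    @nhds E (unbTopology τ A) 0 = unbNhdsZero τ A := by
  simp [nhds_unbTopology hτ]

theorem isTopologicalAddGroup_unbTopology (hτ : IsLocallySolidTop τ) :
    @IsTopologicalAddGroup E (unbTopology τ A) _ := by
  refine @IsTopologicalAddGroup.of_comm_of_nhds_zero E _ (unbTopology τ A) ?_ ?_ fun x => ?_
  · rw [nhds_zero_unbTopology hτ]
    exact tendsto_add_unbNhdsZero hτ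
  · simpa [nhds_zero_unbTopology hτ] using tendsto_neg_unbNhdsZero
  · rw [nhds_unbTopology hτ, nhds_zero_unbTopology hτ]

theorem IsLocallySolidTop.tendsto_nhds_zero_of_tendsto_unbNhdsZero (hτ : IsLocallySolidTop τ)
    {f : α → E} {u : E} (hu : u ∈ A) (hu0 : 0 ≤ u) (hfu : ∀ᶠ i in l, |f i| ≤ u)
    (hf : Tendsto f l (unbNhdsZero τ A)) : Tendsto f l (𝓝 0) := by
  refine hτ.tendsto_nhds_zero_of_abs_le (tendsto_unbNhdsZero_iff.1 hf u hu hu0) ?_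
  filter_upwards [hfu] with i hi
  rw [inf_eq_left.2 hi, abs_abs]

theorem t2Space_unbTopology (hτ : IsLocallySolidTop τ) [T1Space E] :
    @T2Space E (unbTopology τ univ) := by
  have := isTopologicalAddGroup_unbTopology (A := univ) hτ
  refine @IsTopologicalAddGroup.t2Space_of_zero_sep E (unbTopology τ univ) _ this fun y hy => ?_
  have hy' : |y| ≠ 0 := fun h =>
    hy (le_antisymm (h ▸ le_abs_self y) (neg_nonpos.1 (h ▸ neg_le_abs y)))
  refine ⟨(fun x => |x| ⊓ |y|) ⁻¹' {|y|}ᶜ, ?_, by simp⟩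
  rw [nhds_zero_unbTopology hτ]
  exact unbNhdsZero_le_comap (mem_univ _) (abs_nonneg y)
    (preimage_mem_comap (compl_singleton_mem_nhds hy'.symm))

theorem exists_seq_unbNhdsZero_eq (hτ : IsLocallySolidTop τ)
    [(unbNhdsZero τ univ).IsCountablyGenerated] :
    ∃ a : ℕ → E, (∀ k, 0 ≤ a k) ∧ unbNhdsZero τ (range a) = unbNhdsZero τ univ := by
  obtain ⟨W, hW⟩ := (unbNhdsZero τ (univ : Set E)).exists_antitone_basis
  have hdir : DirectedOn ((fun a => comap (fun x : E => |x| ⊓ a) (𝓝 0)) ⁻¹'o (· ≥ ·))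
      {a | a ∈ univ ∧ 0 ≤ a} := fun a ha b hb =>
    ⟨a ⊔ b, ⟨mem_univ _, ha.2.trans le_sup_left⟩,
      comap_abs_inf_mono hτ ha.2 le_sup_left, comap_abs_inf_mono hτ hb.2 le_sup_right⟩
  have hW_mem : ∀ k, ∃ a, 0 ≤ a ∧ W k ∈ comap (fun x => |x| ⊓ a) (𝓝 0) := fun k => by
    obtain ⟨a, ⟨-, ha⟩, hWa⟩ :=
      (mem_biInf_of_directed hdir ⟨0, mem_univ _, le_rfl⟩).1 (hW.mem k)
    exact ⟨a, ha, hWa⟩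
  choose a ha hWa using hW_mem
  refine ⟨a, ha, le_antisymm ?_ ?_⟩
  · exact hW.ge_iff.2 fun k _ => unbNhdsZero_le_comap (mem_range_self k) (ha k) (hWa k)
  · exact unbNhdsZero_le_of_forall_le hτ fun b _ hb => ⟨b, mem_univ b, le_rfl⟩

theorem metrizableSpace_unbTopology (hτ : IsLocallySolidTop τ) [T1Space E]
    [FirstCountableTopology E] {e : E}
    (h : unbNhdsZero τ (range fun n : ℕ => n • e) ≤ unbNhdsZero τ univ) :
    @TopologicalSpace.MetrizableSpace E (unbTopology τ univ) := by
  have := isTopologicalAddGroup_unbTopology (A := univ) hτ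
  have := t2Space_unbTopology hτ
  have : (@nhds E (unbTopology τ univ) 0).IsCountablyGenerated := by
    rw [nhds_zero_unbTopology hτ, le_antisymm
      (unbNhdsZero_le_of_forall_le hτ fun b _ _ => ⟨b, mem_univ b, le_rfl⟩) h]
    exact isCountablyGenerated_unbNhdsZero (countable_range _)
  exact @IsTopologicalAddGroup.metrizableSpace_of_isCountablyGenerated E _ (unbTopology τ univ)
    _ _ _

variable [PosSMulMono ℝ E]

theorem tendsto_sub_inf_nsmul_unbNhdsZero (hτ : IsLocallySolidTop τ) {x e : E} (hx : 0 ≤ x)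
    (he : 0 ≤ e) :
    Tendsto (fun n : ℕ => x - x ⊓ n • e) atTop (unbNhdsZero τ (range fun n : ℕ => n • e)) := by
  refine tendsto_unbNhdsZero_iff.2 ?_
  rintro _ ⟨k, rfl⟩ -
  refine hτ.tendsto_nhds_zero_of_nsmul_abs_le hx fun m => ?_
  filter_upwards [eventually_ge_atTop (m * k)] with n hn
  have hy : 0 ≤ x - x ⊓ n • e := sub_nonneg.2 inf_le_left
  rw [abs_of_nonneg hy, abs_of_nonneg (le_inf hy (nsmul_nonneg he k))]
  refine le_trans (nsmul_le_nsmul_right (inf_le_inf_right _ (sub_le_sub_left ?_ x)) m)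
    (nsmul_inf_sub_inf_nsmul_le hx (nsmul_nonneg he k) m)
  rw [smul_smul]
  exact inf_le_inf_left x (nsmul_le_nsmul_left he hn)

theorem unbNhdsZero_range_nsmul_le (hτ : IsLocallySolidTop τ) {e : E} (he : 0 ≤ e)
    (hdense : closure (idealGenerated {e}) = univ) :
    unbNhdsZero τ (range fun n : ℕ => n • e) ≤ unbNhdsZero τ univ := by
  have := hτ.1
  refine tendsto_id'.1 <| tendsto_unbNhdsZero_iff.2 fun a _ ha => tendsto_def.2 fun V hV => ?_
  obtain ⟨V₁, hV₁, hV₁solid, hV₁V⟩ := hτ.2.2 V hV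
  obtain ⟨W, hW, hWsolid, hWV₁⟩ := hτ.exists_solid_half hV₁
  obtain ⟨z, hazW, hz⟩ : ∃ z, a - z ∈ W ∧ z ∈ idealGenerated {e} :=
    mem_closure_iff_nhds.1 (hdense ▸ mem_univ a) _
      ((continuous_const.sub continuous_id).tendsto' a 0 (sub_self a) hW)
  obtain ⟨c, hc⟩ := (idealGenerated_singleton he).subset hz
  obtain ⟨k, hk⟩ := exists_nat_ge c
  have hzk : |z| ≤ k • e := hc.trans (by
    rw [← Nat.cast_smul_eq_nsmul ℝ]; exact smul_le_smul_of_nonneg_right hk he)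
  have hk_mem := (tendsto_unbNhdsZero_iff.1 tendsto_id (k • e)
    (mem_range_self (f := fun n : ℕ => n • e) k) (nsmul_nonneg he k)).eventually_mem hW
  filter_upwards [hk_mem] with w hw
  refine hV₁V (hV₁solid.mem_of_le (hWV₁ _ hw _ (hWsolid hazW (abs_abs _).le)) ?_ ?_)
  · exact le_inf (abs_nonneg w) ha
  · exact abs_inf_le_abs_inf_add_abs_sub w hzk

theorem closure_idealGenerated_eq_univ (hτ : IsLocallySolidTop τ) {e : E} (he : 0 ≤ e)
    (h : unbNhdsZero τ (range fun n : ℕ => n • e) ≤ unbNhdsZero τ univ) :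
    closure (idealGenerated {e}) = univ := by
  have := hτ.1
  rw [idealGenerated_singleton he]
  have hpos : ∀ x, 0 ≤ x → x ∈ closure {x | ∃ c : ℝ, |x| ≤ c • e} := fun x hx => by
    have hlim := hτ.tendsto_nhds_zero_of_tendsto_unbNhdsZero (mem_univ x) hx
      (.of_forall fun n => ?_) ((tendsto_sub_inf_nsmul_unbNhdsZero hτ hx he).mono_right h)
    · have hconv : Tendsto (fun n : ℕ => x ⊓ n • e) atTop (𝓝 x) := by
        simpa using (tendsto_const_nhds (x := x)).sub hlim
      refine mem_closure_of_tendsto hconv (.of_forall fun n => ⟨n, ?_⟩)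
      rw [abs_of_nonneg (le_inf hx (nsmul_nonneg he n)), Nat.cast_smul_eq_nsmul]
      exact inf_le_right
    · rw [abs_of_nonneg (sub_nonneg.2 inf_le_left)]
      exact sub_le_self x (le_inf hx (nsmul_nonneg he n))
  refine eq_univ_of_forall fun x => ?_
  rw [← posPart_sub_negPart x]
  refine map_mem_closure₂ continuous_sub (hpos _ (posPart_nonneg x)) (hpos _ (negPart_nonneg x))
    fun a ⟨c, hc⟩ b ⟨d, hd⟩ => ⟨c + d, ?_⟩
  rw [sub_eq_add_neg, add_smul]
  exact (abs_add_le a (-b)).trans (add_le_add hc (by rwa [abs_neg]))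

theorem exists_unbNhdsZero_range_nsmul_le (hτ : IsLocallySolidTop τ) [T1Space E]
    [FirstCountableTopology E]
    (hcomp : @CompleteSpace E (@IsTopologicalAddGroup.rightUniformSpace E _ τ hτ.1))
    [(unbNhdsZero τ univ).IsCountablyGenerated] :
    ∃ e : E, 0 ≤ e ∧ unbNhdsZero τ (range fun n : ℕ => n • e) ≤ unbNhdsZero τ univ := by
  obtain ⟨a, ha, ha_eq⟩ := exists_seq_unbNhdsZero_eq hτ
  have := hτ.1
  have := hτ.2.1
  let := IsTopologicalAddGroup.rightUniformSpace E
  have := isUniformAddGroup_of_addCommGroup (G := E)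
  have := hτ.orderClosedTopology
  obtain ⟨c, hc, hsum⟩ := exists_pos_summable_smul a
  have hterm : ∀ k, 0 ≤ c k • a k := fun k => smul_nonneg (hc k).le (ha k)
  have he : 0 ≤ ∑' k, c k • a k := tsum_nonneg hterm
  refine ⟨_, he, ha_eq ▸ unbNhdsZero_le_of_forall_le hτ ?_⟩
  rintro _ ⟨k, rfl⟩ -
  obtain ⟨N, hN⟩ := exists_le_nsmul_of_smul_le (hc k) he (hsum.le_tsum k fun j _ => hterm j)
  exact ⟨_, mem_range_self N, hN⟩

end Unbounded

theorem stmt9_general (τ : TopologicalSpace X)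
    (hτ : IsLocallySolidTop τ) (hmet : @TopologicalSpace.MetrizableSpace X τ)
    (hcomp : @CompleteSpace X (@IsTopologicalAddGroup.rightUniformSpace X _ τ hτ.1)) :
    @TopologicalSpace.MetrizableSpace X (unbTopology τ Set.univ) ↔
      ∃ e : X, 0 ≤ e ∧ @closure X τ (idealGenerated {e}) = Set.univ := by
  let := τ
  constructor
  · intro hu
    have : (unbNhdsZero τ univ).IsCountablyGenerated := by
      rw [← nhds_zero_unbTopology hτ]
      exact @FirstCountableTopology.nhds_generated_countable X (unbTopology τ univ) _ 0
    obtain ⟨e, he, hle⟩ := exists_unbNhdsZero_range_nsmul_le hτ hcomp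
    exact ⟨e, he, closure_idealGenerated_eq_univ hτ he hle⟩
  · rintro ⟨e, he, hdense⟩
    exact metrizableSpace_unbTopology hτ (unbNhdsZero_range_nsmul_le hτ he hdense)

/-- if `τ` is complete and metrizable, then `u τ` is metrizable iff `X`
has a quasi-interior point. -/
theorem stmt9 (hArch : VLArchimedean X) (τ : TopologicalSpace X)
    (hτ : IsLocallySolidTop τ) (hmet : @TopologicalSpace.MetrizableSpace X τ)
    (hcomp : @CompleteSpace X (@IsTopologicalAddGroup.rightUniformSpace X _ τ hτ.1)) :
    @TopologicalSpace.MetrizableSpace X (unbTopology τ Set.univ) ↔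
      ∃ e : X, 0 ≤ e ∧ @closure X τ (idealGenerated {e}) = Set.univ :=
  stmt9_general τ hτ hmet hcomp
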